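/- arXiv:1611.06991 — 6 statements merged into one kernel-verified Lean document; each statement's English description precedes it below -/
import Mathlib

section
/- Transpose Lemma: for any (d+1)×(d+1) matrix A and degree N, the N-th symmetric power of the transpose satisfies (A^T)̄ = B^{-1} (Ā)^T B, where B is the diagonal matrix of multinomial coefficients B_{mm} = N!/(m_0!⋯m_d!). -/
open MvPolynomial Matrix BigOperators

/-- Multi-indices of `d+1` entries with total degree `N`. -/
abbrev MIdx (d N : ℕ) := {m : Fin (d+1) → ℕ // ∑ i, m i = N}

instance (d N : ℕ) : Fintype (MIdx d N) :=
  Fintype.subtype (Finset.Nat.antidiagonalTuple (d+1) N)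
    (fun _ => Finset.Nat.mem_antidiagonalTuple)

/-- The `(m,n)` matrix element of the symmetric power of `A`:
the coefficient of `x^n` in `(Ax)^m`. -/
noncomputable def symPowEntry {R : Type} [CommSemiring R] {d : ℕ}
    (A : Matrix (Fin (d+1)) (Fin (d+1)) R) (m n : Fin (d+1) → ℕ) : R :=
  MvPolynomial.coeff (Finsupp.equivFunOnFinite.symm n)
    (∏ i, (∑ j, MvPolynomial.C (A i j) * MvPolynomial.X j) ^ m i)

/-- The `N`-th symmetric power of `A`, as a matrix indexed by multi-indices
of total degree `N`. -/
noncomputable def symPow {R : Type} [CommSemiring R] (d N : ℕ)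
    (A : Matrix (Fin (d+1)) (Fin (d+1)) R) : Matrix (MIdx d N) (MIdx d N) R :=
  fun m n => symPowEntry A m.1 n.1

/-- `Γ(g)_{mn}`: the coefficient of `x^n` in `(Σ_{μ,λ} g_{μλ} x_λ ∂_μ) x^m`. -/
noncomputable def gammaEntry {d : ℕ} (g : Matrix (Fin (d+1)) (Fin (d+1)) ℂ)
    (m n : Fin (d+1) → ℕ) : ℂ :=
  MvPolynomial.coeff (Finsupp.equivFunOnFinite.symm n)
    (∑ μ, ∑ lam, MvPolynomial.C (g μ lam) *
      (MvPolynomial.X lam * MvPolynomial.pderiv μ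
        (MvPolynomial.monomial (Finsupp.equivFunOnFinite.symm m) 1)))

/-- The degree-`N` generator `Γ(g)` of the symmetric representation. -/
noncomputable def gammaMat (d N : ℕ) (g : Matrix (Fin (d+1)) (Fin (d+1)) ℂ) :
    Matrix (MIdx d N) (MIdx d N) ℂ :=
  fun m n => gammaEntry g m.1 n.1

/-- The diagonal matrix `B` of multinomial coefficients of degree `N`. -/
noncomputable def multinomMat (d N : ℕ) : Matrix (MIdx d N) (MIdx d N) ℂ :=
  Matrix.diagonal fun m => (Nat.multinomial Finset.univ m.1 : ℂ)

/-!
Expanding each factor of `(Ax)^m` by the multinomial theorem writes `Ā_{mn}` as a sum over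
contingency tables `k` with row sums `m` and column sums `n` of
`∏ᵢ multinomial(kᵢ) · ∏ᵢⱼ Aᵢⱼ^kᵢⱼ`. After multiplication by `multinomial(m)` the coefficient
becomes the multinomial coefficient of all entries of `k`, which does not change when `k` is
transposed. Transposing the tables therefore matches `multinomial(m) · (Aᵀ)̄_{mn}` with
`multinomial(n) · Ā_{nm}`, that is `B (Aᵀ)̄ = (Ā)ᵀ B`.
-/

open Finset

namespace Nat

theorem multinomial_univ_comp_equiv {α β : Type*} [Fintype α] [Fintype β] (e : α ≃ β)
    (f : β → ℕ) : multinomial univ (f ∘ e) = multinomial univ f := by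
  simp only [multinomial, Function.comp_apply, e.sum_comp, e.prod_comp fun i => (f i)!]

theorem multinomial_mul_prod_multinomial {ι κ : Type*} [Fintype ι] [Fintype κ]
    (k : ι → κ → ℕ) :
    multinomial univ (fun i => ∑ j, k i j) * ∏ i, multinomial univ (k i)
      = multinomial univ (Function.uncurry k) := by
  apply Nat.eq_of_mul_eq_mul_left (prod_pos fun p _ => factorial_pos (Function.uncurry k p))
  calc (∏ p, (Function.uncurry k p)!) *
        (multinomial univ (fun i => ∑ j, k i j) * ∏ i, multinomial univ (k i))
      = (∏ i, (∑ j, k i j)!) * multinomial univ (fun i => ∑ j, k i j) := by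
        simp_rw [← multinomial_spec univ, Fintype.prod_prod_type, Function.uncurry_apply_pair,
          prod_mul_distrib]
        ring
    _ = (∑ p, Function.uncurry k p)! := by
        rw [multinomial_spec, Fintype.sum_prod_type]; rfl
    _ = (∏ p, (Function.uncurry k p)!) * multinomial univ (Function.uncurry k) :=
        (multinomial_spec _ _).symm

end Nat

section ContingencyTables

variable {ι κ : Type*} [Fintype ι] [Fintype κ] [DecidableEq ι] [DecidableEq κ]

def contingencyTables (m : ι → ℕ) (n : κ → ℕ) : Finset (ι → κ → ℕ) :=
  {k ∈ Fintype.piFinset fun i => univ.piAntidiag (m i) | ∀ j, ∑ i, k i j = n j}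

theorem mem_contingencyTables {m : ι → ℕ} {n : κ → ℕ} {k : ι → κ → ℕ} :
    k ∈ contingencyTables m n ↔ (∀ i, ∑ j, k i j = m i) ∧ ∀ j, ∑ i, k i j = n j := by
  simp [contingencyTables, mem_piAntidiag]

theorem swap_mem_contingencyTables {m : ι → ℕ} {n : κ → ℕ} {k : ι → κ → ℕ}
    (hk : k ∈ contingencyTables m n) : Function.swap k ∈ contingencyTables n m :=
  mem_contingencyTables.2 (mem_contingencyTables.1 hk).symm

end ContingencyTables

namespace MvPolynomial

theorem sum_C_mul_X_pow {σ R : Type*} [Fintype σ] [DecidableEq σ] [CommSemiring R]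
    (a : σ → R) (e : ℕ) :
    (∑ j, C (a j) * X j) ^ e = ∑ k ∈ univ.piAntidiag e,
      monomial (Finsupp.equivFunOnFinite.symm k) (Nat.multinomial univ k * ∏ j, a j ^ k j) := by
  rw [sum_pow_eq_sum_piAntidiag]
  refine sum_congr rfl fun k _ => ?_
  simp_rw [C_mul_X_eq_monomial, monomial_pow, ← monomial_sum_prod, ← C_eq_coe_nat,
    C_mul_monomial]
  congr
  ext j
  simp [Finsupp.single_apply]

end MvPolynomial

theorem symPowEntry_eq_sum_contingencyTables {R : Type} [CommSemiring R] {d : ℕ}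
    (A : Matrix (Fin (d+1)) (Fin (d+1)) R) (m n : Fin (d+1) → ℕ) :
    symPowEntry A m n = ∑ k ∈ contingencyTables m n,
      (∏ i, (Nat.multinomial univ (k i) : R)) * ∏ i, ∏ j, A i j ^ k i j := by
  rw [contingencyTables, sum_filter]
  simp_rw [symPowEntry, MvPolynomial.sum_C_mul_X_pow, prod_univ_sum, MvPolynomial.coeff_sum,
    ← MvPolynomial.monomial_sum_prod, MvPolynomial.coeff_monomial, prod_mul_distrib]
  refine sum_congr rfl fun k _ => ?_
  congr 1
  simp [Finsupp.ext_iff, eq_comm]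

theorem multinomial_mul_symPowEntry_transpose {R : Type} [CommSemiring R] {d : ℕ}
    (A : Matrix (Fin (d+1)) (Fin (d+1)) R) (m n : Fin (d+1) → ℕ) :
    (Nat.multinomial univ m : R) * symPowEntry Aᵀ m n
      = Nat.multinomial univ n * symPowEntry A n m := by
  simp_rw [symPowEntry_eq_sum_contingencyTables, mul_sum, ← mul_assoc]
  refine sum_nbij' Function.swap Function.swap (fun _ => swap_mem_contingencyTables)
    (fun _ => swap_mem_contingencyTables) (fun _ _ => rfl) (fun _ _ => rfl) fun k hk => ?_
  obtain ⟨hrow, hcol⟩ := mem_contingencyTables.1 hk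
  have hm : m = fun i => ∑ j, k i j := funext fun i => (hrow i).symm
  have hn : n = fun j => ∑ i, k i j := funext fun j => (hcol j).symm
  subst hm hn
  congr 1
  · rw [← Nat.cast_prod, ← Nat.cast_mul, ← Nat.cast_prod, ← Nat.cast_mul,
      Nat.multinomial_mul_prod_multinomial, Nat.multinomial_mul_prod_multinomial,
      ← Nat.multinomial_univ_comp_equiv (Equiv.prodComm _ _)]
    rfl
  · exact prod_comm

theorem multinomMat_mul_symPow_transpose (d N : ℕ) (A : Matrix (Fin (d+1)) (Fin (d+1)) ℂ) :
    multinomMat d N * symPow d N Aᵀ = (symPow d N A)ᵀ * multinomMat d N := by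
  ext m n
  rw [multinomMat, diagonal_mul, mul_diagonal, transpose_apply, mul_comm (symPow d N A n m)]
  exact multinomial_mul_symPowEntry_transpose A m.1 n.1

theorem isUnit_det_multinomMat (d N : ℕ) : IsUnit (multinomMat d N).det := by
  rw [← isUnit_iff_isUnit_det, multinomMat, isUnit_diagonal, Pi.isUnit_iff]
  exact fun m => (Nat.cast_ne_zero.2 (Nat.multinomial_pos _ _).ne').isUnit

/-- Transpose Lemma: `(Aᵀ)̄ = B⁻¹ (Ā)ᵀ B` with `B` the diagonal matrix of
multinomial coefficients. -/
theorem symPow_transpose (d N : ℕ) (A : Matrix (Fin (d+1)) (Fin (d+1)) ℂ) :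
    symPow d N Aᵀ = (multinomMat d N)⁻¹ * (symPow d N A)ᵀ * multinomMat d N := by
  rw [Matrix.mul_assoc, ← multinomMat_mul_symPow_transpose,
    nonsing_inv_mul_cancel_left _ _ (isUnit_det_multinomMat d N)]
end

section
/- Recurrence for symmetric power matrix elements: let R be an invertible (d+1)×(d+1) matrix, m a multi-index with |m| = N, n a multi-index with |n| = N−1, and 0 ≤ j ≤ d. Then Σ_{k=0}^{d} m_k · R̄^{(N−1)}_{m−e_k, n} · R_{kj} = (n_j + 1) · R̄^{(N)}_{m, n+e_j}, where e_k denotes the k-th standard multi-index and terms with m_k = 0 are omitted. -/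
/-
Differentiate `(Ax)^m = ∏ᵢ (Σₗ Aᵢₗ xₗ)^{mᵢ}` with respect to `x_j`. On one side the Leibniz rule
gives `Σₖ mₖ Aₖⱼ (Ax)^{m - eₖ}`, whose coefficient of `x^n` is the left-hand side; on the other,
the coefficient of `x^n` in any `∂ⱼ p` is `(n_j + 1)` times the coefficient of `x^{n + e_j}` in `p`.
-/

open MvPolynomial Matrix BigOperators

namespace Derivation

variable {R A M : Type*} [CommSemiring R] [CommSemiring A] [AddCommMonoid M] [Algebra R A]
  [Module A M] [Module R M] (D : Derivation R A M)

theorem leibniz_prod {ι : Type*} [DecidableEq ι] (s : Finset ι) (f : ι → A) :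
    D (∏ i ∈ s, f i) = ∑ i ∈ s, (∏ j ∈ s.erase i, f j) • D (f i) := by
  induction s using Finset.induction_on with
  | empty => simp
  | insert a s ha ih =>
    rw [Finset.prod_insert ha, leibniz, ih, Finset.sum_insert ha, Finset.erase_insert ha,
      Finset.smul_sum, add_comm]
    congr 1
    refine Finset.sum_congr rfl fun i hi => ?_
    rw [Finset.erase_insert_of_ne (ne_of_mem_of_not_mem hi ha).symm,
      Finset.prod_insert fun h => ha (Finset.mem_of_mem_erase h), smul_smul]

theorem leibniz_prod_pow {ι : Type*} [Fintype ι] [DecidableEq ι] (f : ι → A) (m : ι → ℕ) :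
    D (∏ i, f i ^ m i) = ∑ k, m k • (∏ i, f i ^ (m - Pi.single k 1 : ι → ℕ) i) • D (f k) := by
  rw [leibniz_prod]
  refine Finset.sum_congr rfl fun k _ => ?_
  have hprod : ∏ i, f i ^ (m - Pi.single k 1 : ι → ℕ) i =
      f k ^ (m k - 1) * ∏ i ∈ Finset.univ.erase k, f i ^ m i := by
    rw [← Finset.mul_prod_erase _ _ (Finset.mem_univ k)]
    congr 1
    · simp
    · refine Finset.prod_congr rfl fun i hi => ?_
      rw [Pi.sub_apply, Pi.single_eq_of_ne (Finset.ne_of_mem_erase hi), Nat.sub_zero]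
  rw [leibniz_pow, hprod, smul_comm, mul_comm, smul_smul]

end Derivation

namespace MvPolynomial

theorem pderiv_sum_C_mul_X {R σ : Type*} [CommSemiring R] [Fintype σ] [DecidableEq σ]
    (c : σ → R) (j : σ) : pderiv j (∑ l, C (c l) * X l) = C (c j) := by
  simp [pderiv_X, Pi.single_apply]

end MvPolynomial

theorem symPowEntry_recurrence {S : Type} [CommSemiring S] {d : ℕ}
    (A : Matrix (Fin (d+1)) (Fin (d+1)) S) (m n : Fin (d+1) → ℕ) (j : Fin (d+1)) :
    ∑ k : Fin (d+1), (m k : S) * symPowEntry A (m - Pi.single k 1) n * A k j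
      = ((n j : S) + 1) * symPowEntry A m (n + Pi.single j 1) := by
  classical
  have hderiv : pderiv j (∏ i, (∑ l, C (A i l) * X l) ^ m i) =
      ∑ k, C (m k * A k j) *
        ∏ i, (∑ l, C (A i l) * X l) ^ (m - Pi.single k 1 : Fin (d+1) → ℕ) i := by
    rw [(pderiv j).leibniz_prod_pow]
    refine Finset.sum_congr rfl fun k _ => ?_
    rw [pderiv_sum_C_mul_X, map_mul, map_natCast, nsmul_eq_mul, smul_eq_mul]
    ring
  have hshift : Finsupp.equivFunOnFinite.symm (n + Pi.single j 1) =
      Finsupp.equivFunOnFinite.symm n + Finsupp.single j 1 := by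
    ext i
    simp [Finsupp.single_apply, Pi.single_apply, eq_comm]
  calc ∑ k, (m k : S) * symPowEntry A (m - Pi.single k 1) n * A k j
      = coeff (Finsupp.equivFunOnFinite.symm n)
          (pderiv j (∏ i, (∑ l, C (A i l) * X l) ^ m i)) := by
        simp only [hderiv, coeff_sum, coeff_C_mul, symPowEntry]
        exact Finset.sum_congr rfl fun k _ => by ring
    _ = ((n j : S) + 1) * symPowEntry A m (n + Pi.single j 1) := by
        rw [coeff_pderiv, symPowEntry, hshift, mul_comm,
          Finsupp.equivFunOnFinite_symm_apply_apply]

theorem symPow_recurrence_general (d : ℕ) (R : Matrix (Fin (d+1)) (Fin (d+1)) ℂ)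
    (m n : Fin (d+1) → ℕ) (j : Fin (d+1)) :
    ∑ k : Fin (d+1), (m k : ℂ) * symPowEntry R (m - Pi.single k 1) n * R k j
      = ((n j : ℂ) + 1) * symPowEntry R m (n + Pi.single j 1) :=
  symPowEntry_recurrence R m n j

/-- Recurrence for symmetric power matrix elements: for invertible `R`,
`Σ_k m_k R̄^{(N−1)}_{m−e_k,n} R_{kj} = (n_j + 1) R̄^{(N)}_{m,n+e_j}`. -/
theorem symPow_recurrence (d N : ℕ) (hN : 1 ≤ N)
    (R : Matrix (Fin (d+1)) (Fin (d+1)) ℂ) (hR : IsUnit R.det)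
    (m n : Fin (d+1) → ℕ) (hm : ∑ i, m i = N) (hn : ∑ i, n i = N - 1)
    (j : Fin (d+1)) :
    ∑ k : Fin (d+1), (m k : ℂ) * symPowEntry R (m - Pi.single k 1) n * R k j
      = ((n j : ℂ) + 1) * symPowEntry R m (n + Pi.single j 1) :=
  symPow_recurrence_general d R m n j
end

section
/- Trace of the gamma map: for any (d+1)×(d+1) matrix X and degree N, tr Γ(X) = C(N+d, d+1) · tr X, where C denotes the binomial coefficient. -/
/-!
On the diagonal, `x_λ ∂_μ x^m` contributes to `x^m` only for `λ = μ`, with coefficient `m_μ`, so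
`Γ(X)_{mm} = Σ_i m_i X_ii` and `tr Γ(X) = Σ_i X_ii Σ_{|m|=N} m_i`. By symmetry the coordinate sums
`Σ_{|m|=N} m_i` do not depend on `i`, and together they add up to `N` times the number
`C(N+d, d)` of multi-indices, so each equals `N·C(N+d, d)/(d+1) = C(N+d, d+1)`.
-/

open MvPolynomial Matrix BigOperators

theorem MvPolynomial.coeff_X_mul_pderiv_monomial_self {R σ : Type*} [CommSemiring R]
    [DecidableEq σ] (s : σ →₀ ℕ) (i j : σ) :
    coeff s (X j * pderiv i (monomial s (1 : R))) = if j = i then (s i : R) else 0 := by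
  by_cases hji : j = i
  · subst hji
    rw [X_mul_pderiv_monomial, coeff_smul, coeff_monomial, if_pos rfl, if_pos rfl, nsmul_one]
  rw [if_neg hji, pderiv_monomial, X, monomial_mul, coeff_monomial]
  rcases eq_or_ne (s i) 0 with hsi | hsi
  · simp [hsi]
  rw [if_neg]
  intro heq
  have hexp_i := DFunLike.congr_fun heq i
  simp [hji] at hexp_i
  omega

theorem gammaEntry_self {d : ℕ} (g : Matrix (Fin (d+1)) (Fin (d+1)) ℂ) (m : Fin (d+1) → ℕ) :
    gammaEntry g m m = ∑ i, (m i : ℂ) * g i i := by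
  simp only [gammaEntry, coeff_sum, coeff_C_mul, coeff_X_mul_pderiv_monomial_self]
  simp [mul_comm]

namespace MIdx

theorem card (d N : ℕ) : Fintype.card (MIdx d N) = (N + d).choose d := by
  rw [← Fintype.card_congr (Sym.equivNatSumOfFintype (Fin (d+1)) N), Sym.card_sym_eq_choose,
    Fintype.card_fin, show d + 1 + N - 1 = N + d by omega, Nat.choose_symm_add]

def permute {d N : ℕ} (σ : Equiv.Perm (Fin (d+1))) : MIdx d N ≃ MIdx d N :=
  (σ.arrowCongr (Equiv.refl ℕ)).subtypeEquiv fun m => by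
    simp [Equiv.arrowCongr_apply, Equiv.sum_comp]

theorem sum_apply_eq_sum_apply_zero {d N : ℕ} (i : Fin (d+1)) :
    ∑ m : MIdx d N, m.1 i = ∑ m : MIdx d N, m.1 0 :=
  Fintype.sum_equiv (permute (Equiv.swap i 0)) _ _ fun m => by
    simp [permute, Equiv.arrowCongr_apply]

theorem sum_apply (d N : ℕ) (i : Fin (d+1)) :
    ∑ m : MIdx d N, m.1 i = (N + d).choose (d+1) := by
  have hsum : (d + 1) * ∑ m : MIdx d N, m.1 0 = (d + 1) * (N + d).choose (d+1) :=
    calc (d + 1) * ∑ m : MIdx d N, m.1 0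
        = ∑ j : Fin (d+1), ∑ m : MIdx d N, m.1 j := by
          simp [sum_apply_eq_sum_apply_zero (N := N)]
      _ = ∑ m : MIdx d N, ∑ j, m.1 j := Finset.sum_comm
      _ = (N + d).choose d * N := by
          rw [Finset.sum_congr rfl fun m _ => m.2, Finset.sum_const, Finset.card_univ, card,
            smul_eq_mul]
      _ = (d + 1) * (N + d).choose (d+1) := by
          rw [mul_comm (d + 1), Nat.choose_succ_right_eq, Nat.add_sub_cancel]
  rw [sum_apply_eq_sum_apply_zero]
  exact Nat.eq_of_mul_eq_mul_left d.succ_pos hsum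

end MIdx

/-- Trace of the gamma map: `tr Γ(X) = C(N+d, d+1) · tr X`. -/
theorem gamma_trace (d N : ℕ) (X : Matrix (Fin (d+1)) (Fin (d+1)) ℂ) :
    (gammaMat d N X).trace = ((N + d).choose (d+1) : ℂ) * X.trace := by
  calc (gammaMat d N X).trace = ∑ m : MIdx d N, ∑ i, (m.1 i : ℂ) * X i i :=
        Finset.sum_congr rfl fun m _ => gammaEntry_self X m.1
    _ = ∑ i, (∑ m : MIdx d N, (m.1 i : ℂ)) * X i i := by
        simp_rw [Finset.sum_comm (γ := MIdx d N), Finset.sum_mul]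
    _ = ((N + d).choose (d+1) : ℂ) * X.trace := by
        simp_rw [← Nat.cast_sum, MIdx.sum_apply, Matrix.trace, Matrix.diag, Finset.mul_sum]
end

section
/- Columns Theorem: let A be a (d+1)×(d+1) matrix and for each j let Λ_j = diag(A_{0j},…,A_{dj}) be the diagonal matrix formed from column j of A. Set Λ = Σ_j v_j Λ_j with commuting indeterminates v_j. Then the N-th symmetric power of Λ is diagonal, and its diagonal entry at multi-index m equals Σ_n Ā_{mn} v^n; i.e., the coefficient of v^n in the diagonal of Λ̄ is the diagonal matrix whose m-entry is Ā_{mn}. -/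
open MvPolynomial Matrix BigOperators

/-!
Since `Λ` is diagonal, `(Λx)^m = (∏ᵢ Λᵢᵢ^{mᵢ}) x^m`, so `Λ̄` is diagonal with `m`-entry
`∏ᵢ (Σⱼ Aᵢⱼ vⱼ)^{mᵢ} = (Av)^m`. This is a form of degree `N` in `v`, and its coefficient of
`v^n` is `Ā_{mn}` by the very definition of the symmetric power.
-/

namespace MvPolynomial

variable {R : Type} [CommSemiring R]

lemma monomial_equivFunOnFinite_symm {σ : Type} [Fintype σ] (n : σ → ℕ) (c : R) :
    monomial (Finsupp.equivFunOnFinite.symm n) c = C c * ∏ j, X j ^ n j := by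
  rw [monomial_eq, Finsupp.prod_fintype _ _ fun _ => pow_zero _]
  rfl

lemma isHomogeneous_prod_pow_linear {ι σ : Type} [Fintype ι] [Fintype σ]
    (A : Matrix ι σ R) (m : ι → ℕ) :
    (∏ i, (∑ j, C (A i j) * X j) ^ m i).IsHomogeneous (∑ i, m i) := by
  have hlin : ∀ i, (∑ j, C (A i j) * X j : MvPolynomial σ R).IsHomogeneous 1 :=
    fun i => .sum _ _ _ fun j _ => isHomogeneous_C_mul_X _ j
  simpa only [one_mul] using IsHomogeneous.prod _ _ _ fun i _ => (hlin i).pow (m i)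

lemma IsHomogeneous.eq_sum_multiIndex {d N : ℕ} {p : MvPolynomial (Fin (d+1)) R}
    (hp : p.IsHomogeneous N) :
    p = ∑ n : MIdx d N,
      C (coeff (Finsupp.equivFunOnFinite.symm n.1) p) * ∏ j, X j ^ n.1 j := by
  set e : MIdx d N → Fin (d+1) →₀ ℕ := fun n => Finsupp.equivFunOnFinite.symm n.1
  have he : Function.Injective e := fun n n' h =>
    Subtype.ext (Finsupp.equivFunOnFinite.symm.injective h)
  have hsupp : p.support ⊆ Finset.univ.image e := by
    intro v hv
    have hdeg : ∑ i, v i = N := by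
      rw [← Finsupp.degree_eq_sum, Finsupp.degree_eq_weight_one]
      exact hp (mem_support_iff.mp hv)
    exact Finset.mem_image.mpr ⟨⟨v, hdeg⟩, Finset.mem_univ _, by simp [e]⟩
  simp only [← monomial_equivFunOnFinite_symm]
  calc p = ∑ v ∈ p.support, monomial v (coeff v p) := as_sum p
    _ = ∑ v ∈ Finset.univ.image e, monomial v (coeff v p) :=
        Finset.sum_subset hsupp fun v _ hv => by
          rw [notMem_support_iff.mp hv, monomial_zero]
    _ = ∑ n : MIdx d N, monomial (e n) (coeff (e n) p) :=
        Finset.sum_image fun n _ n' _ h => he h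

end MvPolynomial

section

variable {R : Type} [CommSemiring R] {d : ℕ}

lemma symPowEntry_diagonal (D : Fin (d+1) → R) (m n : Fin (d+1) → ℕ) :
    symPowEntry (Matrix.diagonal D) m n = if m = n then ∏ i, D i ^ m i else 0 := by
  have hrow : ∀ i, (∑ j, C (Matrix.diagonal D i j) * X j : MvPolynomial (Fin (d+1)) R)
      = C (D i) * X i := fun i => by
    simp [Matrix.diagonal_apply, apply_ite C]
  simp only [symPowEntry, hrow, mul_pow, Finset.prod_mul_distrib, ← map_pow, ← map_prod,
    ← monomial_equivFunOnFinite_symm, coeff_monomial, EmbeddingLike.apply_eq_iff_eq]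

lemma symPow_diagonal (N : ℕ) (D : Fin (d+1) → R) :
    symPow d N (Matrix.diagonal D) = Matrix.diagonal fun m => ∏ i, D i ^ m.1 i := by
  ext m n
  simp only [symPow, symPowEntry_diagonal, Matrix.diagonal_apply, Subtype.ext_iff]

end

/-- Columns Theorem: with `Λ_j` the diagonal matrix from column `j` of `A` and
`Λ = Σ_j v_j Λ_j` (in indeterminates `v_j`), the symmetric power `Λ̄` is
diagonal with `m`-entry `Σ_n Ā_{mn} v^n`. -/
theorem columns_theorem (d N : ℕ) (A : Matrix (Fin (d+1)) (Fin (d+1)) ℂ) :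
    symPow d N
        (Matrix.diagonal fun i =>
          ∑ j, MvPolynomial.X j * MvPolynomial.C (A i j))
      = Matrix.diagonal (fun m : MIdx d N =>
          ∑ n : MIdx d N, MvPolynomial.C (symPowEntry A m.1 n.1) *
            ∏ j, MvPolynomial.X j ^ n.1 j) := by
  rw [symPow_diagonal]
  congr 1
  funext m
  simp only [mul_comm (X _)]
  have hform := isHomogeneous_prod_pow_linear A m.1
  rw [m.2] at hform
  exact hform.eq_sum_multiIndex
end

section
/- Let A be a (d+1)×(d+1) matrix whose column 0 consists of all 1's, and for 1 ≤ j ≤ d let Λ_j be the diagonal matrix formed from column j of A. Then for each degree N and each j, the diagonal matrix whose m-entry is Ā_{m, e_j} (the column of the N-th symmetric power Ā indexed by the multi-index (N−1, 0,…,1,…,0) with 1 in slot j) equals Γ(Λ_j). -/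
/-!
For `φ` homogeneous of degree `N` and `j ≠ 0`, the coefficient of `x_0^(N-1) x_j` in `φ` is
`(∂_j φ)(e_0)`. For `φ = ∏ (Ax)_i ^ m_i` every linear factor takes the value `A_i0 = 1` at `e_0`,
so the Leibniz rule gives `Σ_i m_i A_ij`. Since `Λ_j` is diagonal, `Γ(Λ_j) = Σ_μ A_μj x_μ ∂_μ`
multiplies `x^m` by the same number `Σ_μ m_μ A_μj`.
-/

open MvPolynomial Matrix BigOperators

namespace MvPolynomial

variable {R σ : Type*} [CommSemiring R]

theorem eval_pderiv_prod_pow {ι : Type*} (s : Finset ι) (L : ι → MvPolynomial σ R) (m : ι → ℕ)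
    (x : σ → R) (j : σ) (hL : ∀ i ∈ s, eval x (L i) = 1) :
    eval x (pderiv j (∏ i ∈ s, L i ^ m i)) = ∑ i ∈ s, m i * eval x (pderiv j (L i)) := by
  classical
  induction s using Finset.induction_on with
  | empty => simp
  | insert a s ha ih =>
    rw [Finset.prod_insert ha, Finset.sum_insert ha, pderiv_mul, pderiv_pow,
      ← ih fun i hi => hL i (Finset.mem_insert_of_mem hi)]
    have hLa := hL a (Finset.mem_insert_self a s)
    have hprod : eval x (∏ i ∈ s, L i ^ m i) = 1 := by
      rw [map_prod]
      exact Finset.prod_eq_one fun i hi => by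
        rw [map_pow, hL i (Finset.mem_insert_of_mem hi), one_pow]
    simp only [map_add, map_mul, map_pow, map_natCast, hLa, hprod, one_pow, one_mul, mul_one]

variable [DecidableEq σ]

theorem IsHomogeneous.eval_piSingle_one {φ : MvPolynomial σ R} {n : ℕ}
    (h : φ.IsHomogeneous n) (i : σ) :
    eval (Pi.single i 1) φ = coeff (Finsupp.single i n) φ := by
  rw [eval_eq, Finset.sum_eq_single (Finsupp.single i n)]
  · rw [Finset.prod_eq_one fun k hk => ?_, mul_one]
    rw [Finset.mem_singleton.1 (Finsupp.support_single_subset hk)]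
    simp
  · intro u hu hne
    obtain ⟨k, hku, hki⟩ : ∃ k ∈ u.support, k ≠ i := by
      by_contra! hsub
      have hu_single : u = Finsupp.single i (u i) :=
        Finsupp.support_subset_singleton.1 fun k hk => Finset.mem_singleton.2 (hsub k hk)
      have hdeg : u.degree = n := by
        rw [Finsupp.degree_eq_weight_one]; exact h (mem_support_iff.1 hu)
      rw [hu_single, Finsupp.degree_single] at hdeg
      exact hne (hdeg ▸ hu_single)
    have hk_zero : (Pi.single i 1 : σ → R) k ^ u k = 0 := by
      rw [Pi.single_eq_of_ne hki, zero_pow (Finsupp.mem_support_iff.1 hku)]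
    rw [Finset.prod_eq_zero hku hk_zero, mul_zero]
  · intro hn
    rw [notMem_support_iff.1 hn, zero_mul]

theorem IsHomogeneous.coeff_single_add_single {φ : MvPolynomial σ R} {n : ℕ}
    (h : φ.IsHomogeneous n) {i j : σ} (hji : j ≠ i) :
    coeff (Finsupp.single i (n - 1) + Finsupp.single j 1) φ
      = eval (Pi.single i 1) (pderiv j φ) := by
  rw [h.pderiv.eval_piSingle_one, coeff_pderiv, Finsupp.single_eq_of_ne hji, Nat.cast_zero,
    zero_add, mul_one]

end MvPolynomial

theorem symPowEntry_column {R : Type} [CommSemiring R] {d : ℕ}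
    (A : Matrix (Fin (d+1)) (Fin (d+1)) R) (hA : ∀ i, A i 0 = 1)
    {j : Fin (d+1)} (hj : j ≠ 0) (m : Fin (d+1) → ℕ) :
    symPowEntry A m (Pi.single 0 (∑ i, m i - 1) + Pi.single j 1) = ∑ i, m i * A i j := by
  set L : Fin (d+1) → MvPolynomial (Fin (d+1)) R := fun i => ∑ k, C (A i k) * X k
  have hL : ∀ i, (L i).IsHomogeneous 1 := fun i =>
    IsHomogeneous.sum _ _ _ fun k _ => isHomogeneous_C_mul_X _ _
  have hprod : (∏ i, L i ^ m i).IsHomogeneous (∑ i, m i) :=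
    IsHomogeneous.prod _ _ _ fun i _ => by simpa using (hL i).pow (m i)
  have hidx : Finsupp.equivFunOnFinite.symm (Pi.single 0 (∑ i, m i - 1) + Pi.single j 1)
      = Finsupp.single 0 (∑ i, m i - 1) + Finsupp.single j 1 := by
    ext k
    simp only [Finsupp.coe_equivFunOnFinite_symm, Pi.add_apply, Finsupp.add_apply,
      Finsupp.single_apply, Pi.single_apply, eq_comm]
  rw [symPowEntry, hidx, hprod.coeff_single_add_single hj,
    eval_pderiv_prod_pow _ _ _ _ _ fun i _ => by simp [L, Pi.single_apply, hA]]
  simp [L, Pi.single_apply]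

theorem gammaEntry_diagonal {d : ℕ} (lam : Fin (d+1) → ℂ) (m n : Fin (d+1) → ℕ) :
    gammaEntry (diagonal lam) m n = if m = n then ∑ i, m i * lam i else 0 := by
  simp_rw [gammaEntry, diagonal_apply, apply_ite C, map_zero, ite_mul, zero_mul,
    Finset.sum_ite_eq, Finset.mem_univ, if_true, X_mul_pderiv_monomial, coeff_sum, coeff_C_mul,
    coeff_smul, coeff_monomial, Finsupp.equivFunOnFinite.symm.apply_eq_iff_eq,
    Finsupp.coe_equivFunOnFinite_symm]
  split_ifs <;> simp [mul_comm]

theorem columns_corollary_general (d N : ℕ)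
    (A : Matrix (Fin (d+1)) (Fin (d+1)) ℂ) (hA : ∀ i, A i 0 = 1)
    (j : Fin (d+1)) (hj : j ≠ 0) :
    Matrix.diagonal (fun m : MIdx d N =>
        symPowEntry A m.1 (Pi.single (0 : Fin (d+1)) (N-1) + Pi.single j 1))
      = gammaMat d N (Matrix.diagonal fun i => A i j) := by
  ext ⟨m, rfl⟩ n
  rw [diagonal_apply, gammaMat, gammaEntry_diagonal, symPowEntry_column A hA hj]
  exact if_congr Subtype.ext_iff rfl rfl

/-- If column `0` of `A` is all `1`'s, then for `1 ≤ j ≤ d` the diagonal matrix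
with `m`-entry `Ā_{m, (N−1)e_0 + e_j}` equals `Γ(Λ_j)`, where `Λ_j` is the
diagonal matrix from column `j` of `A`. -/
theorem columns_corollary (d N : ℕ) (hN : 1 ≤ N)
    (A : Matrix (Fin (d+1)) (Fin (d+1)) ℂ) (hA : ∀ i, A i 0 = 1)
    (j : Fin (d+1)) (hj : j ≠ 0) :
    Matrix.diagonal (fun m : MIdx d N =>
        symPowEntry A m.1 (Pi.single (0 : Fin (d+1)) (N-1) + Pi.single j 1))
      = gammaMat d N (Matrix.diagonal fun i => A i j) :=
  columns_corollary_general d N A hA j hj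
end

section
/- Reflection involution property: let U = 2(vv*/v*v) − I be a unitary reflection with all first-column entries nonzero, δ the diagonal matrix of the first column of U, D a positive diagonal matrix, A = δ^{-1} U √D, and Φ = (Ā)* the degree-N Krawtchouk matrix. Then ((δ* D^{-1/2})̄ · Φ)² = I, where (δ* D^{-1/2})̄ denotes the N-th symmetric power of the diagonal matrix δ* D^{-1/2}. -/
open MvPolynomial Matrix BigOperators

/-!
Write `C = δ* D^{-1/2}`. Because `U² = I`, the diagonal factors cancel in
`A Cᴴ A = δ⁻¹ U √D · D^{-1/2} δ · δ⁻¹ U √D = δ⁻¹ √D = (C⁻¹)ᴴ`.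
The symmetric power `S` is multiplicative and commutes with `ᴴ` on diagonal matrices, so
`Φ S(C) Φ = (S(A) S(Cᴴ) S(A))ᴴ = S((C⁻¹)ᴴ)ᴴ = S(C⁻¹)`, and hence
`(S(C) Φ)² = S(C) S(C⁻¹) = S(I) = I`.
-/

namespace SymPow

variable {R : Type} [CommSemiring R] {d : ℕ}

-- Substituting `x ↦ Ax` is `bind₁ (linForm A)`, and `symPowEntry A m n` is the coefficient
-- of `x^n` in the image of `x^m`; multiplicativity of `symPow` comes from composing substitutions.
noncomputable def linForm (A : Matrix (Fin (d+1)) (Fin (d+1)) R) (i : Fin (d+1)) :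
    MvPolynomial (Fin (d+1)) R :=
  ∑ j, C (A i j) * X j

noncomputable def xPow (m : Fin (d+1) → ℕ) : MvPolynomial (Fin (d+1)) R :=
  monomial (Finsupp.equivFunOnFinite.symm m) 1

lemma xPow_eq_prod (m : Fin (d+1) → ℕ) :
    (xPow m : MvPolynomial (Fin (d+1)) R) = ∏ i, X i ^ m i := by
  rw [xPow, monomial_eq, map_one, one_mul]
  exact Finsupp.prod_fintype _ _ fun i => pow_zero _

lemma bind₁_linForm_xPow (A : Matrix (Fin (d+1)) (Fin (d+1)) R) (m : Fin (d+1) → ℕ) :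
    bind₁ (linForm A) (xPow m) = ∏ i, linForm A i ^ m i := by
  rw [xPow, bind₁_monomial, map_one, one_mul]
  exact Finsupp.prod_fintype _ _ fun i => pow_zero _

lemma symPowEntry_eq_coeff_bind₁ (A : Matrix (Fin (d+1)) (Fin (d+1)) R)
    (m n : Fin (d+1) → ℕ) :
    symPowEntry A m n = coeff (Finsupp.equivFunOnFinite.symm n) (bind₁ (linForm A) (xPow m)) := by
  rw [bind₁_linForm_xPow]
  rfl

lemma bind₁_linForm_linForm (A B : Matrix (Fin (d+1)) (Fin (d+1)) R) (i : Fin (d+1)) :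
    bind₁ (linForm A) (linForm B i) = linForm (B * A) i := by
  simp only [linForm, map_sum, map_mul, bind₁_C_right, bind₁_X_right, mul_apply, Finset.mul_sum,
    Finset.sum_mul, mul_assoc]
  exact Finset.sum_comm

lemma bind₁_linForm_mul (A B : Matrix (Fin (d+1)) (Fin (d+1)) R) :
    bind₁ (linForm (A * B)) = (bind₁ (linForm B)).comp (bind₁ (linForm A)) := by
  ext i : 1
  simp [bind₁_linForm_linForm]

lemma isHomogeneous_bind₁_linForm_xPow (A : Matrix (Fin (d+1)) (Fin (d+1)) R)
    (m : Fin (d+1) → ℕ) :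
    (bind₁ (linForm A) (xPow m)).IsHomogeneous (∑ i, m i) := by
  have hm : (xPow m : MvPolynomial (Fin (d+1)) R).IsHomogeneous (∑ i, m i) :=
    isHomogeneous_monomial _ (by simp [Finsupp.degree_eq_sum])
  simpa using hm.aeval (linForm A) fun i =>
    IsHomogeneous.sum _ _ _ fun j _ => isHomogeneous_C_mul_X (A i j) j

lemma coeff_bind₁_of_isHomogeneous {N : ℕ} {q : MvPolynomial (Fin (d+1)) R}
    (hq : q.IsHomogeneous N) (L : Fin (d+1) → MvPolynomial (Fin (d+1)) R)
    (w : Fin (d+1) →₀ ℕ) :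
    coeff w (bind₁ L q) = ∑ p : MIdx d N,
      coeff (Finsupp.equivFunOnFinite.symm p.1) q * coeff w (bind₁ L (xPow p.1)) := by
  have hsupp : q.support ⊆ Finset.univ.image fun p : MIdx d N =>
      Finsupp.equivFunOnFinite.symm p.1 := fun u hu => by
    have hdeg : u.degree = N := by
      rw [Finsupp.degree_eq_weight_one]
      exact hq (mem_support_iff.mp hu)
    rw [Finsupp.degree_eq_sum] at hdeg
    exact Finset.mem_image.mpr ⟨⟨u, hdeg⟩, Finset.mem_univ _, by simp⟩
  have hinj : Function.Injective fun p : MIdx d N => Finsupp.equivFunOnFinite.symm p.1 :=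
    fun a b hab => Subtype.ext (Finsupp.equivFunOnFinite.symm.injective hab)
  calc coeff w (bind₁ L q)
      = ∑ u ∈ q.support, coeff u q * coeff w (bind₁ L (monomial u 1)) := by
        conv_lhs => rw [q.as_sum]
        simp only [map_sum, coeff_sum]
        refine Finset.sum_congr rfl fun u _ => ?_
        rw [← mul_one (coeff u q), ← C_mul_monomial, map_mul, bind₁_C_right, coeff_C_mul,
          mul_one]
    _ = ∑ u ∈ Finset.univ.image fun p : MIdx d N => Finsupp.equivFunOnFinite.symm p.1,
          coeff u q * coeff w (bind₁ L (monomial u 1)) :=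
        Finset.sum_subset hsupp fun u _ hu => by
          rw [notMem_support_iff.mp hu, zero_mul]
    _ = _ := Finset.sum_image fun a _ b _ hab => hinj hab

theorem symPow_mul (N : ℕ) (A B : Matrix (Fin (d+1)) (Fin (d+1)) R) :
    symPow d N (A * B) = symPow d N A * symPow d N B := by
  ext m n
  have hq := isHomogeneous_bind₁_linForm_xPow A m.1
  rw [m.2] at hq
  simp only [symPow, mul_apply, symPowEntry_eq_coeff_bind₁, bind₁_linForm_mul,
    AlgHom.comp_apply]
  exact coeff_bind₁_of_isHomogeneous hq _ _

theorem symPow_diagonal (N : ℕ) (c : Fin (d+1) → R) :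
    symPow d N (diagonal c) = diagonal fun m : MIdx d N => ∏ i, c i ^ m.1 i := by
  have hlin : linForm (diagonal c) = fun i => C (c i) * X i :=
    funext fun i => by simp [linForm, diagonal_apply, apply_ite C, ite_mul]
  ext m n
  rw [symPow, symPowEntry_eq_coeff_bind₁, bind₁_linForm_xPow, hlin]
  simp only [mul_pow, Finset.prod_mul_distrib, ← map_pow, ← map_prod, ← xPow_eq_prod,
    xPow, coeff_C_mul, coeff_monomial, diagonal_apply, Subtype.ext_iff,
    (Finsupp.equivFunOnFinite.symm.injective).eq_iff]
  split_ifs <;> simp_all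

theorem symPow_one (N : ℕ) : symPow d N (1 : Matrix (Fin (d+1)) (Fin (d+1)) R) = 1 := by
  rw [← diagonal_one, symPow_diagonal]
  simp

theorem conjTranspose_symPow_diagonal [StarRing R] (N : ℕ) (c : Fin (d+1) → R) :
    (symPow d N (diagonal c))ᴴ = symPow d N (diagonal (star c)) := by
  simp only [symPow_diagonal, diagonal_conjTranspose, Pi.star_def, star_prod, star_pow]

theorem symPow_diagonal_mul_conjTranspose_sq [StarRing R] (N : ℕ) {c e : Fin (d+1) → R}
    (hce : c * e = 1) {A : Matrix (Fin (d+1)) (Fin (d+1)) R}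
    (hA : A * diagonal (star c) * A = diagonal (star e)) :
    (symPow d N (diagonal c) * (symPow d N A)ᴴ) ^ 2 = 1 := by
  calc (symPow d N (diagonal c) * (symPow d N A)ᴴ) ^ 2
      = symPow d N (diagonal c) *
          (symPow d N A * (symPow d N (diagonal c))ᴴ * symPow d N A)ᴴ := by
        simp only [sq, conjTranspose_mul, conjTranspose_conjTranspose, Matrix.mul_assoc]
    _ = symPow d N (diagonal c) * (symPow d N (diagonal (star e)))ᴴ := by
        rw [conjTranspose_symPow_diagonal, ← symPow_mul, ← symPow_mul, hA]
    _ = 1 := by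
        rw [conjTranspose_symPow_diagonal, star_star, ← symPow_mul, diagonal_mul_diagonal,
          ← Pi.mul_def, hce, Pi.one_def, diagonal_one, symPow_one]

end SymPow

section Reflection

variable {K : Type} [Field K] {n : Type} [Fintype n] [DecidableEq n]

theorem reflection_mul_self (v w : n → K) (h : w ⬝ᵥ v ≠ 0) :
    ((2 / (w ⬝ᵥ v)) • vecMulVec v w - 1) * ((2 / (w ⬝ᵥ v)) • vecMulVec v w - 1) = 1 := by
  have hsq : vecMulVec v w * vecMulVec v w = (w ⬝ᵥ v) • vecMulVec v w := by
    rw [vecMulVec_mul_vecMulVec, vecMulVec_smul]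
  have hcoef : 2 / (w ⬝ᵥ v) * (2 / (w ⬝ᵥ v)) * (w ⬝ᵥ v) = 2 * (2 / (w ⬝ᵥ v)) := by
    field_simp
  rw [sub_mul, mul_sub, mul_sub, smul_mul_smul_comm, hsq, smul_smul, hcoef, one_mul, mul_one,
    mul_one]
  module

theorem diagonal_scaled_involution_mul_mul_self {U : Matrix n n K} (hU : U * U = 1)
    {u s : n → K} (hu : ∀ i, u i ≠ 0) (hs : ∀ i, s i ≠ 0) :
    (diagonal u)⁻¹ * U * diagonal s * diagonal (u / s) * ((diagonal u)⁻¹ * U * diagonal s)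
      = diagonal (s / u) := by
  have hinv : (diagonal u)⁻¹ = diagonal u⁻¹ :=
    inv_eq_right_inv (by rw [diagonal_mul_diagonal, ← diagonal_one]; congr; ext i; simp [hu i])
  have hmid : diagonal s * diagonal (u / s) * diagonal u⁻¹ = 1 := by
    rw [diagonal_mul_diagonal, diagonal_mul_diagonal, ← diagonal_one]
    congr
    ext i
    simp only [Pi.div_apply, Pi.inv_apply]
    field_simp [hu i, hs i]
  calc (diagonal u)⁻¹ * U * diagonal s * diagonal (u / s) * ((diagonal u)⁻¹ * U * diagonal s)
      = diagonal u⁻¹ * U * (diagonal s * diagonal (u / s) * diagonal u⁻¹) * U * diagonal s := by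
        simp only [hinv, Matrix.mul_assoc]
    _ = diagonal (s / u) := by
        rw [hmid, Matrix.mul_one, Matrix.mul_assoc (diagonal u⁻¹), hU, Matrix.mul_one,
          diagonal_mul_diagonal, div_eq_inv_mul]
        rfl

end Reflection

open SymPow

/-- Reflection involution property: for a unitary reflection
`U = 2vv*/(v*v) − I` with nonzero first-column entries, `A = δ⁻¹ U √D` and
`Φ = (Ā)*`, one has `((δ* D^{-1/2})̄ · Φ)² = I`. -/
theorem reflection_involution (d N : ℕ) (v : Fin (d+1) → ℂ) (hv : v ≠ 0)
    (Dv : Fin (d+1) → ℝ) (hD : ∀ i, 0 < Dv i) :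
    ∀ U : Matrix (Fin (d+1)) (Fin (d+1)) ℂ,
      U = (2 / ∑ i, (starRingEnd ℂ) (v i) * v i) •
            Matrix.vecMulVec v (fun j => (starRingEnd ℂ) (v j)) - 1 →
      (∀ i, U i 0 ≠ 0) →
      ∀ A : Matrix (Fin (d+1)) (Fin (d+1)) ℂ,
        A = (Matrix.diagonal fun i => U i 0)⁻¹ * U *
            Matrix.diagonal (fun i => (Real.sqrt (Dv i) : ℂ)) →
        ∀ Φ : Matrix (MIdx d N) (MIdx d N) ℂ,
          Φ = (symPow d N A)ᴴ →
          (symPow d N ((Matrix.diagonal fun i => U i 0)ᴴ *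
              Matrix.diagonal (fun i => ((Real.sqrt (Dv i))⁻¹ : ℂ))) * Φ) ^ 2
            = 1 := by
  intro U hU hu A hA Φ hΦ
  set u : Fin (d+1) → ℂ := fun i => U i 0
  set s : Fin (d+1) → ℂ := fun i => (Real.sqrt (Dv i) : ℂ)
  have hs : ∀ i, s i ≠ 0 := fun i => Complex.ofReal_ne_zero.mpr (Real.sqrt_ne_zero'.mpr (hD i))
  have hUU : U * U = 1 := hU ▸ reflection_mul_self v (star v) (by
    open ComplexOrder in rwa [Ne, dotProduct_star_self_eq_zero])
  have hC : (diagonal u)ᴴ * diagonal (fun i => ((Real.sqrt (Dv i))⁻¹ : ℂ))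
      = diagonal (star u / s) := by
    rw [diagonal_conjTranspose, diagonal_mul_diagonal, div_eq_mul_inv]
    rfl
  rw [hΦ, hC]
  refine symPow_diagonal_mul_conjTranspose_sq N (e := s / star u) ?_ ?_
  · ext i
    have hu' : star (u i) ≠ 0 := star_ne_zero.mpr (hu i)
    simp only [Pi.mul_apply, Pi.div_apply, Pi.one_apply, Pi.star_apply]
    field_simp [hs i]
  · have hc : star (star u / s) = u / s := funext fun i => by simp [s, Complex.conj_ofReal]
    have he : star (s / star u) = s / u := funext fun i => by simp [s, Complex.conj_ofReal]
    rw [hc, he, hA]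
    exact diagonal_scaled_involution_mul_mul_self hUU hu hs
end
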